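/- Let s₀, s₁ ∈ ℝ, 0 < p₀ < p₁ < ∞, q ∈ (0,∞], τ ∈ [0,∞). Then the embedding of unweighted Besov-type sequence spaces ḃ_{p₀,q}^{s₀,τ} ↪ ḃ_{p₁,q}^{s₁,τ} holds if and only if s₀ − n/p₀ = s₁ − n/p₁. -/

import Mathlib

open MeasureTheory
open scoped BigOperators ENNReal

/-- A dyadic cube `2^{-j}([0,1)^n + k)` in `ℝⁿ`, encoded by its generation `j`
and its position `k`. -/
structure DyadicCube (n : ℕ) where
  j : ℤ
  k : Fin n → ℤ
deriving DecidableEq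

namespace DyadicCube

variable {n : ℕ}

/-- The side length `ℓ(Q) = 2^{-j}`. -/
noncomputable def len (Q : DyadicCube n) : ℝ := (2 : ℝ) ^ (-Q.j)

/-- The lower-left corner `x_Q = 2^{-j} k`. -/
noncomputable def corner (Q : DyadicCube n) (i : Fin n) : ℝ := (2 : ℝ) ^ (-Q.j) * Q.k i

/-- The volume `|Q| = 2^{-jn}`. -/
noncomputable def vol (Q : DyadicCube n) : ℝ := Q.len ^ (n : ℕ)

/-- The cube `Q` as a subset of `ℝⁿ`. -/
noncomputable def toSet (Q : DyadicCube n) : Set (Fin n → ℝ) :=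
  {x | ∀ i, Q.corner i ≤ x i ∧ x i < Q.corner i + Q.len}

/-- The Euclidean distance `|x_Q - x_R|` between the corners of two dyadic cubes. -/
noncomputable def cdist (Q R : DyadicCube n) : ℝ :=
  Real.sqrt (∑ i, (Q.corner i - R.corner i) ^ 2)

end DyadicCube

/-- `υ : 𝒟 → (0,∞)` is a `(δ₁, δ₂; ω)`-order growth function: it is positive and
`υ(Q)/υ(R) ≤ C (1 + |x_Q - x_R|/(ℓ(Q) ∨ ℓ(R)))^ω (|Q|/|R|)^{δ₁}` when `ℓ(Q) ≤ ℓ(R)`,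
with exponent `δ₂` in place of `δ₁` when `ℓ(R) < ℓ(Q)`. -/
def IsGrowthFunction (n : ℕ) (δ₁ δ₂ ω : ℝ) (υ : DyadicCube n → ℝ) : Prop :=
  (∀ Q, 0 < υ Q) ∧ ∃ C : ℝ, 0 < C ∧ ∀ Q R : DyadicCube n,
    υ Q / υ R ≤ C * (1 + Q.cdist R / max Q.len R.len) ^ ω *
      (if Q.len ≤ R.len then (Q.vol / R.vol) ^ δ₁ else (Q.vol / R.vol) ^ δ₂)

attribute [local instance] Classical.propDecidable

/-- The `ℓ^q`-norm (over `ℤ`) of a family of extended nonnegative reals,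
with the usual modification (supremum) when `q = ∞`. -/
noncomputable def lqNorm (q : ℝ≥0∞) (a : ℤ → ℝ≥0∞) : ℝ≥0∞ :=
  if q = ⊤ then ⨆ j, a j else (∑' j, a j ^ q.toReal) ^ (1 / q.toReal)

/-- The Besov-type sequence space quasi-norm
`‖t‖_{ḃ^{s,τ}_{p,q}} = sup_P |P|^{-τ} (∑_{j ≥ j_P} [∑_{Q ∈ 𝒟_j, Q ⊆ P}
(|t_Q| |Q|^{-s/n - 1/2})^p |Q|]^{q/p})^{1/q}`. -/
noncomputable def bTypeNorm (n : ℕ) (s τ p : ℝ) (q : ℝ≥0∞)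
    (t : DyadicCube n → ℝ) : ℝ≥0∞ :=
  ⨆ P : DyadicCube n, ENNReal.ofReal (P.vol ^ (-τ)) *
    lqNorm q (fun j : ℤ => if P.j ≤ j then
      (∑' Q : DyadicCube n, if Q.j = j ∧ Q.toSet ⊆ P.toSet then
          ENNReal.ofReal ((|t Q| * Q.vol ^ (-s / (n : ℝ) - 1 / 2)) ^ p * Q.vol) else 0) ^ (1 / p)
      else 0)


section Helpers

lemma lp_mono {ι : Type*} (a : ι → ℝ≥0∞) {p q : ℝ} (hp : 0 < p) (hpq : p ≤ q) :
    (∑' i, a i ^ q) ^ (1/q) ≤ (∑' i, a i ^ p) ^ (1/p) := by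
  have hq : 0 < q := hp.trans_le hpq
  set S := ∑' i, a i ^ p with hS
  rcases eq_or_ne S ⊤ with hT | hT
  · rw [hT, ENNReal.top_rpow_of_pos (by positivity)]; exact le_top
  rcases eq_or_ne S 0 with h0 | h0
  · have ha : ∀ i, a i = 0 := by
      intro i
      have h1 : a i ^ p = 0 := ENNReal.tsum_eq_zero.mp h0 i
      rcases (ENNReal.rpow_eq_zero_iff).mp h1 with ⟨h, _⟩ | ⟨_, h⟩
      · exact h
      · exact absurd h (not_lt.mpr hp.le)
    rw [h0]
    simp [ha, ENNReal.zero_rpow_of_pos hq, ENNReal.zero_rpow_of_pos (inv_pos.mpr hq),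
      ENNReal.zero_rpow_of_pos (inv_pos.mpr hp)]
  · have key : ∀ i, a i ^ q ≤ (a i ^ p) * S ^ (q/p - 1) := by
      intro i
      have h1 : a i ^ p ≤ S := ENNReal.le_tsum i
      rcases eq_or_ne (a i) 0 with h0i | h0i
      · simp [h0i, ENNReal.zero_rpow_of_pos hq]
      · have hne : a i ^ p ≠ 0 := by
          simp [ENNReal.rpow_eq_zero_iff, h0i, not_lt.mpr hp.le]
        have hnt : a i ^ p ≠ ⊤ := (h1.trans_lt (lt_top_iff_ne_top.mpr hT)).ne
        have heq : a i ^ q = (a i ^ p) ^ (1:ℝ) * (a i ^ p) ^ (q/p - 1) := by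
          rw [← ENNReal.rpow_add _ _ hne hnt, ← ENNReal.rpow_mul]
          congr 1; field_simp; ring
        rw [heq, ENNReal.rpow_one]
        exact mul_le_mul_right (ENNReal.rpow_le_rpow h1 (by
          rw [sub_nonneg]; exact (one_le_div hp).mpr hpq)) _
    have hsum : ∑' i, a i ^ q ≤ S ^ (q/p) := by
      calc ∑' i, a i ^ q ≤ ∑' i, (a i ^ p) * S ^ (q/p-1) := ENNReal.tsum_le_tsum key
        _ = S * S ^ (q/p-1) := by rw [ENNReal.tsum_mul_right]
        _ = S ^ (q/p) := by
            have hh : q/p = 1 + (q/p - 1) := by ring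
            conv_rhs => rw [hh]
            rw [ENNReal.rpow_add _ _ h0 hT, ENNReal.rpow_one]
    calc (∑' i, a i ^ q) ^ (1/q) ≤ (S ^ (q/p)) ^ (1/q) :=
          ENNReal.rpow_le_rpow hsum (by positivity)
      _ = S ^ (1/p) := by
          rw [← ENNReal.rpow_mul]; congr 1; field_simp

namespace DyadicCube

lemma vol_eq {n : ℕ} (Q : DyadicCube n) : Q.vol = (2:ℝ) ^ (-Q.j * (n:ℤ)) := by
  rw [vol, len, ← zpow_natCast ((2:ℝ) ^ (-Q.j)) n, ← zpow_mul]

lemma vol_pos {n : ℕ} (Q : DyadicCube n) : 0 < Q.vol := by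
  rw [vol_eq]; positivity

lemma vol_rpow {n : ℕ} (Q : DyadicCube n) (x : ℝ) :
    Q.vol ^ x = (2:ℝ) ^ (((-Q.j * (n:ℤ) : ℤ) : ℝ) * x) := by
  rw [vol_eq, ← Real.rpow_intCast 2 (-Q.j * (n:ℤ)), ← Real.rpow_mul (by norm_num)]

lemma vol_mono {n : ℕ} {P R : DyadicCube n} (h : P.j ≤ R.j) : R.vol ≤ P.vol := by
  rw [vol_eq, vol_eq]
  apply zpow_le_zpow_right₀ one_le_two
  have : (0:ℤ) ≤ (n:ℤ) := Int.natCast_nonneg n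
  nlinarith

end DyadicCube

lemma lqNorm_mono {q : ℝ≥0∞} {a b : ℤ → ℝ≥0∞} (h : ∀ j, a j ≤ b j) :
    lqNorm q a ≤ lqNorm q b := by
  unfold lqNorm; split
  · exact iSup_mono h
  · exact ENNReal.rpow_le_rpow
      (ENNReal.tsum_le_tsum fun j => ENNReal.rpow_le_rpow (h j) ENNReal.toReal_nonneg)
      (one_div_nonneg.mpr ENNReal.toReal_nonneg)

lemma lqNorm_spike {q : ℝ≥0∞} (hq : q ≠ 0) (j₀ : ℤ) (c : ℝ≥0∞) :
    lqNorm q (fun j => if j = j₀ then c else 0) = c := by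
  unfold lqNorm; split
  · refine le_antisymm (iSup_le fun j => ?_) (le_trans (by simp) (le_iSup (fun j => if j = j₀ then c else 0) j₀))
    dsimp only
    split <;> simp
  · rename_i htop
    have hr : 0 < q.toReal := ENNReal.toReal_pos hq htop
    have hfun : ∀ j : ℤ, ((if j = j₀ then c else 0):ℝ≥0∞) ^ q.toReal
        = if j = j₀ then c ^ q.toReal else 0 := by
      intro j; split <;> simp [ENNReal.zero_rpow_of_pos hr]
    rw [tsum_congr hfun, tsum_ite_eq, ← ENNReal.rpow_mul, mul_one_div, div_self hr.ne',
      ENNReal.rpow_one]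

lemma lqNorm_zero {q : ℝ≥0∞} (hq : q ≠ 0) : lqNorm q (fun _ => (0:ℝ≥0∞)) = 0 := by
  simpa using lqNorm_spike hq 0 0

lemma real_rpow_aux {v : ℝ} (hv : 0 < v) (T e p : ℝ) (hT : 0 ≤ T) (hp : 0 < p) :
    (T * v ^ e) ^ p * v = (T * v ^ (e + 1/p)) ^ p := by
  have h1 : (e + 1/p) * p = e * p + 1 := by field_simp
  rw [Real.mul_rpow hT (by positivity), Real.mul_rpow hT (by positivity),
    ← Real.rpow_mul hv.le, ← Real.rpow_mul hv.le, h1, Real.rpow_add hv, Real.rpow_one,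
    mul_assoc]

end Helpers

lemma bTypeNorm_indicator (n : ℕ) (s τ p : ℝ) (q : ℝ≥0∞)
    (hp : 0 < p) (hq : q ≠ 0) (hτ : 0 ≤ τ) (R : DyadicCube n) :
    bTypeNorm n s τ p q (fun Q => if Q = R then 1 else 0)
      = ENNReal.ofReal (R.vol ^ (-s / (n:ℝ) - 1/2 + 1/p - τ)) := by
  have hv : (0:ℝ) < R.vol := R.vol_pos
  set e : ℝ := -s / (n:ℝ) - 1/2 with he
  set c : ℝ≥0∞ := ENNReal.ofReal (R.vol ^ (e + 1/p)) with hc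
  -- inner tsum computation
  have hts : ∀ (P : DyadicCube n) (j : ℤ),
      (∑' Q : DyadicCube n, if Q.j = j ∧ Q.toSet ⊆ P.toSet then
          ENNReal.ofReal ((|if Q = R then (1:ℝ) else 0| * Q.vol ^ (-s / (n:ℝ) - 1/2)) ^ p * Q.vol)
        else 0)
      = if R.j = j ∧ R.toSet ⊆ P.toSet then
          ENNReal.ofReal ((R.vol ^ e) ^ p * R.vol) else 0 := by
    intro P j
    rw [tsum_eq_single R]
    · simp [he]
    · intro Q hQ
      simp [hQ, Real.zero_rpow hp.ne']
  have hX : (ENNReal.ofReal ((R.vol ^ e) ^ p * R.vol)) ^ (1/p) = c := by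
    rw [ENNReal.ofReal_rpow_of_nonneg (by positivity) (by positivity), hc]
    congr 1
    have h1 : (R.vol ^ e) ^ p * R.vol = R.vol ^ (e * p + 1) := by
      rw [Real.rpow_add hv, ← Real.rpow_mul hv.le, Real.rpow_one]
    rw [h1, ← Real.rpow_mul hv.le]
    congr 1
    field_simp
  have main : ∀ P : DyadicCube n,
      (ENNReal.ofReal (P.vol ^ (-τ)) *
        lqNorm q (fun j : ℤ => if P.j ≤ j then
          (∑' Q : DyadicCube n, if Q.j = j ∧ Q.toSet ⊆ P.toSet then
              ENNReal.ofReal ((|if Q = R then (1:ℝ) else 0| * Q.vol ^ (-s / (n:ℝ) - 1/2)) ^ p * Q.vol)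
            else 0) ^ (1/p)
          else 0))
      = if P.j ≤ R.j ∧ R.toSet ⊆ P.toSet then ENNReal.ofReal (P.vol ^ (-τ)) * c else 0 := by
    intro P
    have hg : (fun j : ℤ => if P.j ≤ j then
          (∑' Q : DyadicCube n, if Q.j = j ∧ Q.toSet ⊆ P.toSet then
              ENNReal.ofReal ((|if Q = R then (1:ℝ) else 0| * Q.vol ^ (-s / (n:ℝ) - 1/2)) ^ p * Q.vol)
            else 0) ^ (1/p)
          else 0)
        = fun j : ℤ => if j = R.j then
            (if P.j ≤ R.j ∧ R.toSet ⊆ P.toSet then c else 0) else 0 := by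
      funext j
      rw [hts P j]
      have hz1 : (0:ℝ≥0∞) ^ (1/p) = 0 := ENNReal.zero_rpow_of_pos (by positivity)
      have hz2 : (0:ℝ≥0∞) ^ p⁻¹ = 0 := by simpa [one_div] using hz1
      by_cases h2 : j = R.j
      · by_cases h4 : P.j ≤ R.j
        · by_cases h3 : R.toSet ⊆ P.toSet
          · simp [h2, h4, h3, hX, one_div]
            simpa [one_div] using hX
          · simp [h2, h4, h3, hz1, hz2]
        · simp [h2, h4]
      · have h2' : ¬ (R.j = j) := fun h => h2 h.symm
        simp [h2, h2', hz1, hz2]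
    rw [hg, lqNorm_spike hq]
    split <;> simp
  have hnorm : bTypeNorm n s τ p q (fun Q => if Q = R then 1 else 0)
      = ⨆ P : DyadicCube n,
        (if P.j ≤ R.j ∧ R.toSet ⊆ P.toSet then ENNReal.ofReal (P.vol ^ (-τ)) * c else 0) := by
    unfold bTypeNorm
    exact iSup_congr main
  rw [hnorm]
  have hval : ENNReal.ofReal (R.vol ^ (-τ)) * c
      = ENNReal.ofReal (R.vol ^ (-s / (n:ℝ) - 1/2 + 1/p - τ)) := by
    rw [hc, ← ENNReal.ofReal_mul (by positivity), ← Real.rpow_add hv]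
    congr 1
    rw [he]; ring
  apply le_antisymm
  · refine iSup_le fun P => ?_
    split
    · rename_i hcond
      refine le_trans (mul_le_mul_left
        (ENNReal.ofReal_le_ofReal
          (Real.rpow_le_rpow_of_nonpos hv (DyadicCube.vol_mono hcond.1) (neg_nonpos.mpr hτ))) c)
        (le_of_eq hval)
    · exact zero_le
  · refine le_trans (le_of_eq hval.symm) ?_
    refine le_trans ?_ (le_iSup _ R)
    simp

lemma exp_eq_iff {n s₀ s₁ p₀ p₁ : ℝ} (hn : 0 < n) (hp₀ : 0 < p₀) (hp₁ : 0 < p₁) :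
    -s₁/n - 1/2 + 1/p₁ = -s₀/n - 1/2 + 1/p₀ ↔ s₀ - n/p₀ = s₁ - n/p₁ := by
  constructor <;> intro h <;> field_simp at h ⊢ <;> nlinarith [h, hn, hp₀, hp₁]

/-- Let `s₀, s₁ ∈ ℝ`, `0 < p₀ < p₁ < ∞`, `q ∈ (0,∞]`, `τ ∈ [0,∞)`.
The embedding `ḃ^{s₀,τ}_{p₀,q} ↪ ḃ^{s₁,τ}_{p₁,q}` of unweighted Besov-type sequence
spaces holds if and only if `s₀ - n/p₀ = s₁ - n/p₁`. -/
theorem besov_type_sobolev_embedding_iff (n : ℕ) (hn : 0 < n)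
    (s₀ s₁ p₀ p₁ : ℝ) (hp₀ : 0 < p₀) (hp : p₀ < p₁)
    (q : ℝ≥0∞) (hq : 0 < q) (τ : ℝ) (hτ : 0 ≤ τ) :
    (∃ C : ℝ, 0 < C ∧ ∀ t : DyadicCube n → ℝ,
      bTypeNorm n s₁ τ p₁ q t ≤ ENNReal.ofReal C * bTypeNorm n s₀ τ p₀ q t) ↔
    s₀ - (n : ℝ) / p₀ = s₁ - (n : ℝ) / p₁ := by
  have hn' : (0:ℝ) < (n:ℝ) := Nat.cast_pos.mpr hn
  have hp₁ : 0 < p₁ := hp₀.trans hp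
  constructor
  · rintro ⟨C, hC, hemb⟩
    by_contra hne
    set A₁ : ℝ := -s₁/(n:ℝ) - 1/2 + 1/p₁ - τ with hA₁
    set A₀ : ℝ := -s₀/(n:ℝ) - 1/2 + 1/p₀ - τ with hA₀
    set d : ℝ := A₁ - A₀ with hd
    have hd0 : d ≠ 0 := by
      intro h0
      apply hne
      rw [← exp_eq_iff hn' hp₀ hp₁]
      have : A₁ = A₀ := sub_eq_zero.mp (by rw [← hd]; exact h0)
      rw [hA₁, hA₀] at this
      linarith
    have key : ∀ R : DyadicCube n, R.vol ^ d ≤ C := by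
      intro R
      have hv : (0:ℝ) < R.vol := R.vol_pos
      have h1 := hemb (fun Q => if Q = R then 1 else 0)
      rw [bTypeNorm_indicator n s₁ τ p₁ q hp₁ hq.ne' hτ R,
        bTypeNorm_indicator n s₀ τ p₀ q hp₀ hq.ne' hτ R,
        ← ENNReal.ofReal_mul hC.le] at h1
      have h2 : R.vol ^ A₁ ≤ C * R.vol ^ A₀ :=
        (ENNReal.ofReal_le_ofReal_iff
          (mul_nonneg hC.le (Real.rpow_nonneg hv.le _))).mp h1
      rw [hd, Real.rpow_sub hv]
      exact (div_le_iff₀ (Real.rpow_pos_of_pos hv _)).mpr h2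
    have habs : (0:ℝ) < (n:ℝ) * |d| := mul_pos hn' (abs_pos.mpr hd0)
    have hy : 1 < (2:ℝ) ^ ((n:ℝ) * |d|) :=
      (Real.one_lt_rpow_iff_of_pos two_pos).mpr (Or.inl ⟨one_lt_two, habs⟩)
    obtain ⟨N, hN⟩ := pow_unbounded_of_one_lt C hy
    set jj : ℤ := if 0 < d then -(N:ℤ) else (N:ℤ) with hj
    have hkey := key ⟨jj, fun _ => 0⟩
    rw [DyadicCube.vol_rpow] at hkey
    have hexp : ((((-(⟨jj, fun _ => 0⟩ : DyadicCube n).j * (n:ℤ)) : ℤ)):ℝ) * d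
        = ((n:ℝ) * |d|) * N := by
      show ((((-jj * (n:ℤ)) : ℤ)):ℝ) * d = ((n:ℝ) * |d|) * N
      rw [hj]
      by_cases hdpos : 0 < d
      · rw [abs_of_pos hdpos]; simp [hdpos]; ring
      · have hdneg : d < 0 := lt_of_le_of_ne (not_lt.mp hdpos) hd0
        rw [abs_of_neg hdneg]; simp [hdpos]; ring
    rw [hexp] at hkey
    have hfin : ((2:ℝ) ^ ((n:ℝ)*|d|)) ^ N ≤ C := by
      rw [← Real.rpow_natCast ((2:ℝ) ^ ((n:ℝ)*|d|)) N, ← Real.rpow_mul (by norm_num)]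
      exact hkey
    exact absurd hN (not_lt.mpr hfin)
  · intro hse
    refine ⟨1, one_pos, fun t => ?_⟩
    rw [ENNReal.ofReal_one, one_mul]
    set e : ℝ := -s₀/(n:ℝ) - 1/2 + 1/p₀ with he
    have he1 : -s₁/(n:ℝ) - 1/2 + 1/p₁ = e := (exp_eq_iff hn' hp₀ hp₁).mpr hse
    refine iSup_mono fun P => mul_le_mul_right (lqNorm_mono fun j => ?_) _
    by_cases h1 : P.j ≤ j
    · simp only [h1, if_true]
      set a : DyadicCube n → ℝ≥0∞ := fun Q =>
        if Q.j = j ∧ Q.toSet ⊆ P.toSet then ENNReal.ofReal (|t Q| * Q.vol ^ e) else 0 with ha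
      have hgen : ∀ (s' p' : ℝ), 0 < p' → -s'/(n:ℝ) - 1/2 + 1/p' = e →
          (∑' Q : DyadicCube n, if Q.j = j ∧ Q.toSet ⊆ P.toSet then
              ENNReal.ofReal ((|t Q| * Q.vol ^ (-s' / (n:ℝ) - 1/2)) ^ p' * Q.vol) else 0)
          = ∑' Q, a Q ^ p' := by
        intro s' p' hp' hee
        refine tsum_congr fun Q => ?_
        simp only [ha]
        by_cases hcnd : Q.j = j ∧ Q.toSet ⊆ P.toSet
        · rw [if_pos hcnd, if_pos hcnd]
          rw [ENNReal.ofReal_rpow_of_nonneg (mul_nonneg (abs_nonneg _) (Real.rpow_nonneg Q.vol_pos.le _)) hp'.le]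
          congr 1
          rw [real_rpow_aux Q.vol_pos (|t Q|) (-s'/(n:ℝ) - 1/2) p' (abs_nonneg _) hp', hee]
        · simp [hcnd, ENNReal.zero_rpow_of_pos hp']
      rw [hgen s₁ p₁ hp₁ he1, hgen s₀ p₀ hp₀ he.symm]
      exact lp_mono a hp₀ hp.le
    · simp [h1]
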